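/- arXiv:math/0502153 — 4 statements merged into one kernel-verified Lean document; each statement's English description precedes it below -/
import Mathlib

section
/- Let l, m, k₁, k₂ be integers with d = gcd(l,m) dividing k₁ and k₂, and suppose k₁·m₁ᵖ = ε·k₂·l₁ᵖ for some integer p > 0 and ε = ±1, where l = l₁d, m = m₁d. Then in the Baumslag–Solitar group H(l,m) = ⟨a, b ∣ b⁻¹aˡb = aᵐ⟩ the relation b⁻ᵖ a^(ε·k₁) bᵖ = a^(k₂) holds. -/
/-!
Write `k₁ = d k₁'`, `k₂ = d k₂'`. Since `l₁` and `m₁` are coprime, the relation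
`k₁' m₁ᵖ = ε k₂' l₁ᵖ` forces `ε k₁' = s l₁ᵖ` and `k₂' = s m₁ᵖ` for some integer `s`.
Conjugation by `b` sends `a^(c l)` to `a^(c m)`, so conjugating `p` times by `b` sends
`a^(d s l₁ᵖ)` to `a^(d s m₁ᵖ)`, which is the claim.
-/

/-- The Baumslag–Solitar relator `b⁻¹aˡba⁻ᵐ` in the free group on `a` (= `of true`)
and `b` (= `of false`). -/
def BSrel (l m : ℤ) : FreeGroup Bool :=
  (FreeGroup.of false)⁻¹ * (FreeGroup.of true) ^ l * (FreeGroup.of false) *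
    (FreeGroup.of true) ^ (-m)

/-- The Baumslag–Solitar group `H(l,m) = ⟨a, b ∣ b⁻¹aˡb = aᵐ⟩`. -/
abbrev HH (l m : ℤ) := PresentedGroup ({BSrel l m} : Set (FreeGroup Bool))

theorem IsCoprime.exists_eq_mul_of_mul_eq {R : Type*} [CommRing R] {x y a b : R}
    (h : IsCoprime x y) (hab : a * y = b * x) : ∃ s, a = s * x ∧ b = s * y := by
  obtain ⟨u, v, huv⟩ := h
  refine ⟨u * a + v * b, ?_, ?_⟩
  · linear_combination (-a) * huv + v * hab
  · linear_combination (-b) * huv - u * hab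

theorem Int.isCoprime_of_eq_mul_gcd {l m l₁ m₁ d : ℤ} (hd : d = Int.gcd l m) (hd0 : d ≠ 0)
    (hl : l = l₁ * d) (hm : m = m₁ * d) : IsCoprime l₁ m₁ := by
  subst hd
  have hgcd : (Int.gcd l m : ℤ) = Int.gcd l₁ m₁ * Int.gcd l m := by
    have := congrArg ((↑) : ℕ → ℤ) (Int.gcd_mul_right l₁ (Int.gcd l m) m₁)
    rwa [← hl, ← hm, Int.natAbs_natCast, Nat.cast_mul] at this
  rw [Int.isCoprime_iff_gcd_eq_one]
  exact_mod_cast (mul_eq_right₀ hd0).mp hgcd.symm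

section Conjugation

variable {G : Type*} [Group G] {a b : G} {l m : ℤ}

theorem inv_mul_zpow_mul_eq_zpow_mul (hrel : b⁻¹ * a ^ l * b = a ^ m) (c : ℤ) :
    b⁻¹ * a ^ (c * l) * b = a ^ (c * m) := by
  have := map_zpow (MulAut.conj b⁻¹) (a ^ l) c
  simp only [MulAut.conj_apply, inv_inv, hrel] at this
  rwa [← zpow_mul, ← zpow_mul, mul_comm l, mul_comm m] at this

theorem inv_pow_mul_zpow_mul_pow_eq_zpow {l₁ m₁ d : ℤ}
    (hrel : b⁻¹ * a ^ (l₁ * d) * b = a ^ (m₁ * d)) (n : ℕ) (c : ℤ) :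
    b⁻¹ ^ n * a ^ (d * c * l₁ ^ n) * b ^ n = a ^ (d * c * m₁ ^ n) := by
  induction n generalizing c with
  | zero => simp
  | succ n ih =>
    calc b⁻¹ ^ (n + 1) * a ^ (d * c * l₁ ^ (n + 1)) * b ^ (n + 1)
        = b⁻¹ ^ n * (b⁻¹ * a ^ ((c * l₁ ^ n) * (l₁ * d)) * b) * b ^ n := by
          rw [pow_succ, pow_succ']
          ring_nf
          group
      _ = b⁻¹ ^ n * a ^ (d * (c * m₁) * l₁ ^ n) * b ^ n := by
          rw [inv_mul_zpow_mul_eq_zpow_mul hrel]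
          ring_nf
      _ = a ^ (d * c * m₁ ^ (n + 1)) := by
          rw [ih]
          ring_nf

end Conjugation

theorem HH.inv_mul_zpow_mul_eq_zpow (l m : ℤ) :
    (PresentedGroup.of false : HH l m)⁻¹ * (PresentedGroup.of true : HH l m) ^ l *
      PresentedGroup.of false = PresentedGroup.of true ^ m := by
  have h := PresentedGroup.one_of_mem (Set.mem_singleton (BSrel l m))
  simp only [BSrel, zpow_neg] at h
  exact mul_inv_eq_one.mp h

theorem stmt_9_general (l m k₁ k₂ l₁ m₁ d ε : ℤ) (hd : d = Int.gcd l m)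
    (hl : l = l₁ * d) (hm : m = m₁ * d)
    (hk₁ : d ∣ k₁) (hk₂ : d ∣ k₂) (hε : ε = 1 ∨ ε = -1)
    (p : ℕ) (he : k₁ * m₁ ^ p = ε * k₂ * l₁ ^ p) :
    ((PresentedGroup.of false : HH l m))⁻¹ ^ p *
        (PresentedGroup.of true : HH l m) ^ (ε * k₁) *
        (PresentedGroup.of false : HH l m) ^ p =
      (PresentedGroup.of true : HH l m) ^ k₂ := by
  obtain ⟨k₁', rfl⟩ := hk₁
  obtain ⟨k₂', rfl⟩ := hk₂
  rcases eq_or_ne d 0 with rfl | hd0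
  · simp
  have hcop : IsCoprime (l₁ ^ p) (m₁ ^ p) :=
    (Int.isCoprime_of_eq_mul_gcd hd hd0 hl hm).pow
  have hε2 : ε * ε = 1 := by rcases hε with rfl | rfl <;> norm_num
  obtain ⟨s, hk₁', hk₂'⟩ := hcop.exists_eq_mul_of_mul_eq (a := ε * k₁') (b := k₂') <| by
    apply mul_left_cancel₀ hd0
    linear_combination ε * he + d * k₂' * l₁ ^ p * hε2
  have hrel : (PresentedGroup.of false : HH l m)⁻¹ * PresentedGroup.of true ^ (l₁ * d) *
      PresentedGroup.of false = PresentedGroup.of true ^ (m₁ * d) := by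
    rw [← hl, ← hm]
    exact HH.inv_mul_zpow_mul_eq_zpow l m
  rw [show ε * (d * k₁') = d * s * l₁ ^ p by linear_combination d * hk₁',
    inv_pow_mul_zpow_mul_pow_eq_zpow hrel, hk₂', mul_assoc]

theorem stmt_9 (l m k₁ k₂ l₁ m₁ d ε : ℤ) (hd : d = Int.gcd l m)
    (hl : l = l₁ * d) (hm : m = m₁ * d)
    (hk₁ : d ∣ k₁) (hk₂ : d ∣ k₂) (hε : ε = 1 ∨ ε = -1)
    (p : ℕ) (hp : 0 < p) (he : k₁ * m₁ ^ p = ε * k₂ * l₁ ^ p) :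
    ((PresentedGroup.of false : HH l m))⁻¹ ^ p *
        (PresentedGroup.of true : HH l m) ^ (ε * k₁) *
        (PresentedGroup.of false : HH l m) ^ p =
      (PresentedGroup.of true : HH l m) ^ k₂ :=
  stmt_9_general l m k₁ k₂ l₁ m₁ d ε hd hl hm hk₁ hk₂ hε p he
end

section
/- Let l, m, k₁, k₂ be integers with |l| > m > 0, let d = gcd(l,m) divide both k₁ and k₂, and suppose (k₁ : ℚ)/k₂ = ε·((l:ℚ)/m)^p for some ε = ±1 and integer p ≠ 0. Then the groups G(l,m;k₁) = ⟨a,t ∣ t⁻¹a⁻ᵏ¹taˡt⁻¹aᵏ¹t = aᵐ⟩ and G(l,m;k₂) = ⟨a,t ∣ t⁻¹a⁻ᵏ²taˡt⁻¹aᵏ²t = aᵐ⟩ are isomorphic. -/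
/-- The relator `t⁻¹a⁻ᵏtaˡt⁻¹aᵏta⁻ᵐ` in the free group on `a` (= `of true`) and
`t` (= `of false`). -/
def Grel (l m k : ℤ) : FreeGroup Bool :=
  (FreeGroup.of false)⁻¹ * (FreeGroup.of true) ^ (-k) * (FreeGroup.of false) *
    (FreeGroup.of true) ^ l * (FreeGroup.of false)⁻¹ * (FreeGroup.of true) ^ k *
    (FreeGroup.of false) * (FreeGroup.of true) ^ (-m)

/-- The one-relator group `G(l,m;k) = ⟨a, t ∣ t⁻¹a⁻ᵏtaˡt⁻¹aᵏt = aᵐ⟩`. -/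
abbrev GG (l m k : ℤ) := PresentedGroup ({Grel l m k} : Set (FreeGroup Bool))

/-!
Write `l = d l'`, `m = d m'` with `d = gcd(l, m)`, so that `l'` and `m'` are coprime. For `p = n ≥ 0`
the hypothesis reads `k₁ m'ⁿ = ε k₂ l'ⁿ` after cancelling powers of `d`, which forces
`k₁ = d l'ⁿ c` and `ε k₂ = d m'ⁿ c`; for `p < 0` the roles of `k₁` and `k₂` are swapped.
In `G(l,m;k)` the element `b = t⁻¹aᵏt` conjugates `a^(d l')` to `a^(d m')`, hence `bⁿ` conjugates
`a^(d l'ⁿ c)` to `a^(d m'ⁿ c)`; therefore `a ↦ a, t ↦ bⁿt` and `a ↦ a, t ↦ b⁻ⁿt` are mutually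
inverse isomorphisms between `G(l,m;d l'ⁿ c)` and `G(l,m;d m'ⁿ c)`. Finally `a ↦ a⁻¹, t ↦ t`
identifies `G(l,m;k)` with `G(l,m;-k)`, which accounts for `ε = -1`.
-/

section GroupLemmas

variable {H : Type*} [Group H]

def GGRel (l m k : ℤ) (A T : H) : Prop :=
  (T⁻¹ * A ^ k * T)⁻¹ * A ^ l * (T⁻¹ * A ^ k * T) = A ^ m

theorem map_Grel_eq_one_iff (l m k : ℤ) (f : FreeGroup Bool →* H) :
    f (Grel l m k) = 1 ↔ GGRel l m k (f (.of true)) (f (.of false)) := by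
  have hf : f (Grel l m k) = ((f (.of false))⁻¹ * f (.of true) ^ k * f (.of false))⁻¹ *
      f (.of true) ^ l * ((f (.of false))⁻¹ * f (.of true) ^ k * f (.of false)) *
      (f (.of true) ^ m)⁻¹ := by
    simp only [Grel, map_mul, map_inv, map_zpow]
    group
  rw [hf, mul_inv_eq_one, GGRel]

theorem ggRel_inv_iff {l m k : ℤ} {A T : H} : GGRel l m k A⁻¹ T ↔ GGRel l m (-k) A T := by
  simp only [GGRel, inv_zpow', zpow_neg A l, zpow_neg A m]
  rw [← inv_inj]
  group

theorem inv_mul_zpow_mul_of_inv_mul_zpow_mul {A B : H} {L M : ℤ} (h : B⁻¹ * A ^ L * B = A ^ M)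
    (c : ℤ) : B⁻¹ * A ^ (L * c) * B = A ^ (M * c) := by
  have hconj := conj_zpow (i := c) (a := B⁻¹) (b := A ^ L)
  rw [inv_inv] at hconj
  rw [zpow_mul, zpow_mul, ← h, hconj]

theorem inv_pow_mul_zpow_mul_pow {A B : H} {d l m : ℤ} (h : B⁻¹ * A ^ (d * l) * B = A ^ (d * m))
    (n : ℕ) (c : ℤ) : (B ^ n)⁻¹ * A ^ (d * l ^ n * c) * B ^ n = A ^ (d * m ^ n * c) := by
  induction n generalizing c with
  | zero => simp
  | succ n ih =>
    calc (B ^ (n + 1))⁻¹ * A ^ (d * l ^ (n + 1) * c) * B ^ (n + 1)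
        = (B ^ n)⁻¹ * (B⁻¹ * A ^ (d * l * (l ^ n * c)) * B) * B ^ n := by
          rw [pow_succ']; ring_nf; group
      _ = A ^ (d * m ^ (n + 1) * c) := by
          rw [inv_mul_zpow_mul_of_inv_mul_zpow_mul h,
            show d * m * (l ^ n * c) = d * l ^ n * (m * c) by ring, ih]
          ring_nf

theorem conj_mul_eq_of_conj {A C T : H} {k k' : ℤ} (hC : C⁻¹ * A ^ k' * C = A ^ k) :
    (C * T)⁻¹ * A ^ k' * (C * T) = T⁻¹ * A ^ k * T := by
  rw [← hC]; group

theorem GGRel.mul_left {l m k k' : ℤ} {A C T : H} (h : GGRel l m k A T)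
    (hC : C⁻¹ * A ^ k' * C = A ^ k) : GGRel l m k' A (C * T) := by
  rwa [GGRel, conj_mul_eq_of_conj hC]

end GroupLemmas

theorem Int.exists_eq_mul_pow_mul_of_mul_pow_eq {l m k₁ k₂ : ℤ} (n : ℕ) (hl : l ≠ 0)
    (hk₁ : (l.gcd m : ℤ) ∣ k₁) (hk₂ : (l.gcd m : ℤ) ∣ k₂) (h : k₁ * m ^ n = k₂ * l ^ n) :
    ∃ d l' m' c : ℤ, l = d * l' ∧ m = d * m' ∧ k₁ = d * l' ^ n * c ∧ k₂ = d * m' ^ n * c := by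
  have hd : 0 < l.gcd m := Int.gcd_pos_of_ne_zero_left m hl
  obtain ⟨l', m', hcop, hl', hm'⟩ := Int.exists_gcd_one hd
  set d : ℤ := (l.gcd m : ℤ)
  obtain ⟨x₁, rfl⟩ := hk₁
  obtain ⟨x₂, rfl⟩ := hk₂
  have hd0 : d ≠ 0 := by positivity
  have hx : x₁ * m' ^ n = x₂ * l' ^ n := by
    rw [hl', hm'] at h
    apply mul_left_cancel₀ (pow_ne_zero (n + 1) hd0)
    linear_combination h
  have hcopn : IsCoprime (l' ^ n) (m' ^ n) := (Int.isCoprime_iff_gcd_eq_one.2 hcop).pow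
  obtain ⟨c, rfl⟩ : l' ^ n ∣ x₁ := hcopn.dvd_of_dvd_mul_right ⟨x₂, by rw [hx, mul_comm]⟩
  have hl'n : l' ^ n ≠ 0 := pow_ne_zero n (by rintro rfl; simp [hl'] at hl)
  have hx₂ : x₂ = m' ^ n * c := mul_right_cancel₀ hl'n (by linear_combination -hx)
  exact ⟨d, l', m', c, by rw [hl', mul_comm], by rw [hm', mul_comm], by ring, by rw [hx₂]; ring⟩

theorem Int.mul_pow_eq_of_div_eq_mul_div_pow {l m k₁ k₂ ε : ℤ} (n : ℕ) (hl : l ≠ 0) (hm : m ≠ 0)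
    (hε : ε ≠ 0) (h : (k₁ : ℚ) / k₂ = ε * ((l : ℚ) / m) ^ n) : k₁ * m ^ n = ε * k₂ * l ^ n := by
  have hk₂ : (k₂ : ℚ) ≠ 0 := by
    rintro hk₂
    rw [hk₂, div_zero, eq_comm] at h
    simp_all
  have hmn : (m : ℚ) ^ n ≠ 0 := pow_ne_zero n (by exact_mod_cast hm)
  rw [div_eq_iff hk₂, div_pow] at h
  field_simp at h
  have h' : k₁ * m ^ n = ε * l ^ n * k₂ := by exact_mod_cast h
  linear_combination h'

namespace GG

variable {H : Type*} [Group H] {l m : ℤ}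

def a (l m k : ℤ) : GG l m k := PresentedGroup.of true

def t (l m k : ℤ) : GG l m k := PresentedGroup.of false

def b (l m k : ℤ) : GG l m k := (t l m k)⁻¹ * a l m k ^ k * t l m k

theorem ggRel (l m k : ℤ) : GGRel l m k (a l m k) (t l m k) :=
  (map_Grel_eq_one_iff l m k (PresentedGroup.mk _)).1 (PresentedGroup.one_of_mem rfl)

def lift {k : ℤ} {A T : H} (h : GGRel l m k A T) : GG l m k →* H :=
  PresentedGroup.toGroup (f := fun x => cond x A T) <| by
    rintro r rfl
    exact (map_Grel_eq_one_iff l m k _).2 (by simpa using h)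

section lift

variable {k : ℤ} {A T : H} (h : GGRel l m k A T)

@[simp]
theorem lift_a : lift h (a l m k) = A := PresentedGroup.toGroup.of _

@[simp]
theorem lift_t : lift h (t l m k) = T := PresentedGroup.toGroup.of _

@[simp]
theorem lift_b : lift h (b l m k) = T⁻¹ * A ^ k * T := by
  simp [b]

end lift

theorem hom_ext {k : ℤ} {f g : GG l m k →* H} (ha : f (a l m k) = g (a l m k))
    (ht : f (t l m k) = g (t l m k)) : f = g :=
  PresentedGroup.ext fun | true => ha | false => ht

def mulEquivOfLift {k k' : ℤ} {A T : GG l m k'} {A' T' : GG l m k} (h : GGRel l m k A T)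
    (h' : GGRel l m k' A' T') (hA : lift h' A = a l m k) (hT : lift h' T = t l m k)
    (hA' : lift h A' = a l m k') (hT' : lift h T' = t l m k') : GG l m k ≃* GG l m k' :=
  MonoidHom.toMulEquiv (lift h) (lift h')
    (hom_ext (by simp [hA]) (by simp [hT])) (hom_ext (by simp [hA']) (by simp [hT']))

def negEquiv (l m k : ℤ) : GG l m k ≃* GG l m (-k) :=
  mulEquivOfLift (A := (a l m (-k))⁻¹) (T := t l m (-k)) (A' := (a l m k)⁻¹) (T' := t l m k)
    (ggRel_inv_iff.2 (ggRel l m (-k))) (ggRel_inv_iff.2 (by rw [neg_neg]; exact ggRel l m k))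
    (by simp) (by simp) (by simp) (by simp)

section powConj

variable {d l' m' : ℤ}

theorem inv_b_pow_mul_zpow_mul_b_pow (hl : l = d * l') (hm : m = d * m') (n : ℕ) (c k : ℤ) :
    (b l m k ^ n)⁻¹ * a l m k ^ (d * l' ^ n * c) * b l m k ^ n = a l m k ^ (d * m' ^ n * c) :=
  inv_pow_mul_zpow_mul_pow (by rw [← hl, ← hm]; exact ggRel l m k) n c

def powConjEquiv (hl : l = d * l') (hm : m = d * m') (n : ℕ) (c : ℤ) :
    GG l m (d * l' ^ n * c) ≃* GG l m (d * m' ^ n * c) :=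
  have hC := inv_b_pow_mul_zpow_mul_b_pow hl hm n c (d * m' ^ n * c)
  have hC' : ((b l m (d * l' ^ n * c) ^ n)⁻¹)⁻¹ * a l m _ ^ (d * m' ^ n * c) *
      (b l m (d * l' ^ n * c) ^ n)⁻¹ = a l m _ ^ (d * l' ^ n * c) := by
    rw [← inv_b_pow_mul_zpow_mul_b_pow hl hm n c]; group
  mulEquivOfLift ((ggRel _ _ _).mul_left hC) ((ggRel _ _ _).mul_left hC') (by simp)
    (by rw [map_mul, map_pow, lift_b, lift_t, conj_mul_eq_of_conj hC', b]; group)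
    (by simp)
    (by rw [map_mul, map_inv, map_pow, lift_b, lift_t, conj_mul_eq_of_conj hC, b]; group)

end powConj

theorem nonempty_mulEquiv_of_mul_pow_eq {k₁ k₂ ε : ℤ} (n : ℕ) (hl : l ≠ 0)
    (hk₁ : (l.gcd m : ℤ) ∣ k₁) (hk₂ : (l.gcd m : ℤ) ∣ k₂) (hε : ε = 1 ∨ ε = -1)
    (h : k₁ * m ^ n = ε * k₂ * l ^ n) : Nonempty (GG l m k₁ ≃* GG l m k₂) := by
  obtain ⟨d, l', m', c, hl', hm', rfl, hεk₂⟩ :=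
    Int.exists_eq_mul_pow_mul_of_mul_pow_eq n hl hk₁ (dvd_mul_of_dvd_right hk₂ ε) h
  rcases hε with rfl | rfl
  · rw [one_mul] at hεk₂
    subst hεk₂
    exact ⟨powConjEquiv hl' hm' n c⟩
  · rw [neg_one_mul, neg_eq_iff_eq_neg] at hεk₂
    subst hεk₂
    exact ⟨(powConjEquiv hl' hm' n c).trans (negEquiv l m _)⟩

end GG

theorem stmt_10_general (l m k₁ k₂ ε p : ℤ)
    (h1 : |l| > m) (h2 : m > 0)
    (hk₁ : (Int.gcd l m : ℤ) ∣ k₁) (hk₂ : (Int.gcd l m : ℤ) ∣ k₂)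
    (hε : ε = 1 ∨ ε = -1)
    (he : (k₁ : ℚ) / k₂ = ε * ((l : ℚ) / m) ^ p) :
    Nonempty (GG l m k₁ ≃* GG l m k₂) := by
  have hl : l ≠ 0 := by rintro rfl; rw [abs_zero] at h1; omega
  have hε0 : ε ≠ 0 := by rcases hε with rfl | rfl <;> norm_num
  obtain ⟨n, rfl | rfl⟩ := Int.eq_nat_or_neg p
  · rw [zpow_natCast] at he
    exact GG.nonempty_mulEquiv_of_mul_pow_eq n hl hk₁ hk₂ hε
      (Int.mul_pow_eq_of_div_eq_mul_div_pow n hl h2.ne' hε0 he)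
  · rw [zpow_neg, zpow_natCast, ← inv_pow, inv_div] at he
    have h := Int.mul_pow_eq_of_div_eq_mul_div_pow n h2.ne' hl hε0 he
    obtain ⟨e⟩ := GG.nonempty_mulEquiv_of_mul_pow_eq n hl hk₂ hk₁ hε
      (by rcases hε with rfl | rfl <;> linarith)
    exact ⟨e.symm⟩

theorem stmt_10 (l m k₁ k₂ ε p : ℤ)
    (h1 : |l| > m) (h2 : m > 0)
    (hk₁ : (Int.gcd l m : ℤ) ∣ k₁) (hk₂ : (Int.gcd l m : ℤ) ∣ k₂)
    (hε : ε = 1 ∨ ε = -1) (hp : p ≠ 0)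
    (he : (k₁ : ℚ) / k₂ = ε * ((l : ℚ) / m) ^ p) :
    Nonempty (GG l m k₁ ≃* GG l m k₂) :=
  stmt_10_general l m k₁ k₂ ε p h1 h2 hk₁ hk₂ hε he
end

section
/- Let l = m·s with m > 0, gcd(m,s) = 1, and let r be a nonzero s-number. Then in the Baumslag–Solitar group H(l,m) = ⟨a, b ∣ b⁻¹aˡb = aᵐ⟩, the elements aʳ and b generate the whole group. -/
/-- A nonzero integer `n` is an `s`-number if every prime dividing `n` divides `s`. -/
def IsSNumber (s n : ℤ) : Prop := ∀ p : ℤ, Prime p → p ∣ n → p ∣ s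

theorem stmt_11 (l m s r : ℤ) (hl : l = m * s) (hm : m > 0)
    (hcop : Int.gcd m s = 1) (hr : r ≠ 0) (hrs : IsSNumber s r) :
    Subgroup.closure
        ({(PresentedGroup.of true : HH l m) ^ r, (PresentedGroup.of false : HH l m)} :
          Set (HH l m)) = ⊤ := by
  set a : HH l m := PresentedGroup.of true with ha_def
  set b : HH l m := PresentedGroup.of false with hb_def
  set K := Subgroup.closure ({a ^ r, b} : Set (HH l m)) with hK
  have har : a ^ r ∈ K := Subgroup.subset_closure (by simp)
  have hb : b ∈ K := Subgroup.subset_closure (by simp)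
  -- the defining relation
  have hrel : b⁻¹ * a ^ l * b = a ^ m := by
    have h1 : (PresentedGroup.mk _ (BSrel l m) : HH l m) = 1 := by
      apply (QuotientGroup.eq_one_iff _).2
      exact Subgroup.subset_normalClosure (by simp)
    unfold BSrel at h1
    rw [map_mul, map_mul, map_mul, map_inv, map_zpow, map_zpow] at h1
    have h2 : b⁻¹ * a ^ l * b * a ^ (-m) = 1 := h1
    have h3 := mul_eq_one_iff_eq_inv.1 h2
    simpa [zpow_neg] using h3
  have hconj : ∀ k : ℤ, b⁻¹ * a ^ (l * k) * b = a ^ (m * k) := by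
    intro k
    have h := conj_zpow (i := k) (a := b⁻¹) (b := a ^ l)
    rw [inv_inv] at h
    rw [zpow_mul, ← h, hrel, ← zpow_mul]
  -- main induction
  have main : ∀ n : ℕ, 0 < n → (∀ p : ℤ, Prime p → p ∣ (n : ℤ) → p ∣ s) →
      a ^ (n : ℤ) ∈ K → a ∈ K := by
    intro n
    induction n using Nat.strong_induction_on with
    | _ n ih =>
      intro hn hsn han
      rcases eq_or_ne n 1 with rfl | hn1
      · simpa using han
      · obtain ⟨q, hq, n', rfl⟩ := Nat.exists_prime_and_dvd hn1
        have hq' : Prime (q : ℤ) := Nat.prime_iff_prime_int.1 hq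
        have hqs : (q : ℤ) ∣ s := hsn _ hq' (by exact_mod_cast Dvd.intro n' rfl)
        obtain ⟨t, ht⟩ := hqs
        have hn'pos : 0 < n' := Nat.pos_of_ne_zero (by rintro rfl; simp at hn)
        -- a ^ (n' * m) ∈ K
        have h1 : a ^ ((n' : ℤ) * m) ∈ K := by
          have h3 : a ^ (l * (n' : ℤ)) ∈ K := by
            have h4 : a ^ (((q * n' : ℕ) : ℤ) * (t * m)) ∈ K := by
              rw [zpow_mul]; exact Subgroup.zpow_mem K han _
            have heq : ((q * n' : ℕ) : ℤ) * (t * m) = l * (n' : ℤ) := by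
              push_cast; rw [hl, ht]; ring
            rwa [heq] at h4
          have h5 : b⁻¹ * a ^ (l * (n' : ℤ)) * b ∈ K :=
            mul_mem (mul_mem (inv_mem hb) h3) hb
          rw [hconj] at h5
          rwa [mul_comm]
        -- gcd(m, q) = 1
        have hco : IsCoprime m (q : ℤ) :=
          (Int.isCoprime_iff_gcd_eq_one.2 hcop).of_isCoprime_of_dvd_right ⟨t, ht⟩
        obtain ⟨u, v, huv⟩ := hco
        have hn'K : a ^ ((n' : ℤ)) ∈ K := by
          have heq : (n' : ℤ) = ((n' : ℤ) * m) * u + ((q * n' : ℕ) : ℤ) * v := by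
            push_cast
            linear_combination (-(n' : ℤ)) * huv
          rw [heq, zpow_add, zpow_mul a ((n' : ℤ) * m) u, zpow_mul a (((q * n' : ℕ)) : ℤ) v]
          exact mul_mem (Subgroup.zpow_mem K h1 u) (Subgroup.zpow_mem K han v)
        have hlt : n' < q * n' := by nlinarith [hq.two_le]
        exact ih n' hlt hn'pos
          (fun p hp hpd => hsn p hp (hpd.trans (by push_cast; exact dvd_mul_left _ _))) hn'K
  have haK : a ∈ K := by
    have h1 : a ^ ((r.natAbs : ℕ) : ℤ) ∈ K := by
      rcases Int.natAbs_eq r with h | h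
      · rw [← h]; exact har
      · rw [show ((r.natAbs : ℕ) : ℤ) = -r by omega, zpow_neg]
        exact inv_mem har
    exact main r.natAbs (Int.natAbs_pos.2 hr)
      (fun p hp hpd => hrs p hp (Int.dvd_natAbs.1 hpd)) h1
  rw [eq_top_iff, ← PresentedGroup.closure_range_of ({BSrel l m} : Set (FreeGroup Bool))]
  apply (Subgroup.closure_le _).2
  rintro x ⟨c, rfl⟩
  cases c
  · exact hb
  · exact haK
end

section
/- There exist surjective group homomorphisms in both directions between the one-relator groups G(18,2;2) = ⟨a,t ∣ t⁻¹a⁻²ta¹⁸t⁻¹a²t = a²⟩ and G(18,2;6) = ⟨a,t ∣ t⁻¹a⁻⁶ta¹⁸t⁻¹a⁶t = a²⟩. -/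
namespace Stmt13Aux

lemma rel_eq_one (l m k : ℤ) :
    PresentedGroup.mk ({Grel l m k} : Set (FreeGroup Bool)) (Grel l m k) = 1 := by
  apply (QuotientGroup.eq_one_iff _).mpr
  exact Subgroup.subset_normalClosure (Set.mem_singleton _)

lemma mk_Grel (rels : Set (FreeGroup Bool)) (l m k : ℤ) :
    PresentedGroup.mk rels (Grel l m k) =
      (PresentedGroup.of (rels := rels) false)⁻¹ *
        (PresentedGroup.of (rels := rels) true) ^ (-k) *
        PresentedGroup.of false * (PresentedGroup.of true) ^ l *
        (PresentedGroup.of false)⁻¹ * (PresentedGroup.of true) ^ k *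
        PresentedGroup.of false * (PresentedGroup.of true) ^ (-m) := by
  simp only [Grel, map_mul, map_zpow, map_inv]
  rfl

lemma lift_Grel {G : Type*} [Group G] (f : Bool → G) (l m k : ℤ) :
    FreeGroup.lift f (Grel l m k) =
      (f false)⁻¹ * (f true) ^ (-k) * f false * (f true) ^ l *
        (f false)⁻¹ * (f true) ^ k * f false * (f true) ^ (-m) := by
  simp only [Grel, map_mul, map_zpow, map_inv, FreeGroup.lift_apply_of]

/-- From the relator being trivial, get the conjugation form `(t⁻¹aᵏt)⁻¹ aˡ (t⁻¹aᵏt) = aᵐ`. -/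
lemma rel_to_conj {G : Type*} [Group G] (x t : G) (l m k : ℤ)
    (h : t⁻¹ * x ^ (-k) * t * x ^ l * t⁻¹ * x ^ k * t * x ^ (-m) = 1) :
    (t⁻¹ * x ^ k * t)⁻¹ * x ^ l * (t⁻¹ * x ^ k * t) = x ^ m := by
  have h2 : (t⁻¹ * x ^ k * t)⁻¹ * x ^ l * (t⁻¹ * x ^ k * t) * x ^ (-m) = 1 := by
    rw [← h]; group
  calc (t⁻¹ * x ^ k * t)⁻¹ * x ^ l * (t⁻¹ * x ^ k * t)
      = (t⁻¹ * x ^ k * t)⁻¹ * x ^ l * (t⁻¹ * x ^ k * t) * x ^ (-m) * x ^ m := by group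
    _ = 1 * x ^ m := by rw [h2]
    _ = x ^ m := one_mul _

/-- Cube a conjugation identity: from `b⁻¹x¹⁸b = x²` get `b⁻¹x⁵⁴b = x⁶`. -/
lemma conj_cube {G : Type*} [Group G] (x b : G)
    (h : b⁻¹ * x ^ (18 : ℤ) * b = x ^ (2 : ℤ)) :
    b⁻¹ * x ^ (54 : ℤ) * b = x ^ (6 : ℤ) := by
  calc b⁻¹ * x ^ (54 : ℤ) * b
      = (b⁻¹ * x ^ (18 : ℤ) * b) * (b⁻¹ * x ^ (18 : ℤ) * b) * (b⁻¹ * x ^ (18 : ℤ) * b) := by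
        group
    _ = x ^ (2 : ℤ) * x ^ (2 : ℤ) * x ^ (2 : ℤ) := by rw [h]
    _ = x ^ (6 : ℤ) := by group

/-- Key identity for `φ : G(18,2;2) → G(18,2;6)`, `a ↦ a³`, `t ↦ t`. -/
lemma lemA {G : Type*} [Group G] (x t : G)
    (h : t⁻¹ * x ^ (-6 : ℤ) * t * x ^ (18 : ℤ) * t⁻¹ * x ^ (6 : ℤ) * t * x ^ (-2 : ℤ) = 1) :
    t⁻¹ * (x ^ (3 : ℤ)) ^ (-2 : ℤ) * t * (x ^ (3 : ℤ)) ^ (18 : ℤ) * t⁻¹ *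
      (x ^ (3 : ℤ)) ^ (2 : ℤ) * t * (x ^ (3 : ℤ)) ^ (-2 : ℤ) = 1 := by
  have hb := rel_to_conj x t 18 2 6 h
  have h54 := conj_cube x (t⁻¹ * x ^ (6 : ℤ) * t) hb
  calc t⁻¹ * (x ^ (3 : ℤ)) ^ (-2 : ℤ) * t * (x ^ (3 : ℤ)) ^ (18 : ℤ) * t⁻¹ *
      (x ^ (3 : ℤ)) ^ (2 : ℤ) * t * (x ^ (3 : ℤ)) ^ (-2 : ℤ)
      = ((t⁻¹ * x ^ (6 : ℤ) * t)⁻¹ * x ^ (54 : ℤ) * (t⁻¹ * x ^ (6 : ℤ) * t)) * x ^ (-6 : ℤ) := by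
        group
    _ = x ^ (6 : ℤ) * x ^ (-6 : ℤ) := by rw [h54]
    _ = 1 := by group

/-- In `G(18,2;2)` with `T = (t⁻¹x²t)·t`, we have `T⁻¹x¹⁸T = t⁻¹x²t`. -/
lemma lemB1 {G : Type*} [Group G] (x t : G)
    (h : t⁻¹ * x ^ (-2 : ℤ) * t * x ^ (18 : ℤ) * t⁻¹ * x ^ (2 : ℤ) * t * x ^ (-2 : ℤ) = 1) :
    ((t⁻¹ * x ^ (2 : ℤ) * t) * t)⁻¹ * x ^ (18 : ℤ) * ((t⁻¹ * x ^ (2 : ℤ) * t) * t) =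
      t⁻¹ * x ^ (2 : ℤ) * t := by
  have hb := rel_to_conj x t 18 2 2 h
  calc ((t⁻¹ * x ^ (2 : ℤ) * t) * t)⁻¹ * x ^ (18 : ℤ) * ((t⁻¹ * x ^ (2 : ℤ) * t) * t)
      = t⁻¹ * ((t⁻¹ * x ^ (2 : ℤ) * t)⁻¹ * x ^ (18 : ℤ) * (t⁻¹ * x ^ (2 : ℤ) * t)) * t := by
        group
    _ = t⁻¹ * x ^ (2 : ℤ) * t := by rw [hb]

/-- Key identity for `ψ : G(18,2;6) → G(18,2;2)`, `a ↦ a³`, `t ↦ (t⁻¹a²t)t`. -/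
lemma lemB {G : Type*} [Group G] (x t : G)
    (h : t⁻¹ * x ^ (-2 : ℤ) * t * x ^ (18 : ℤ) * t⁻¹ * x ^ (2 : ℤ) * t * x ^ (-2 : ℤ) = 1) :
    ((t⁻¹ * x ^ (2 : ℤ) * t) * t)⁻¹ * (x ^ (3 : ℤ)) ^ (-6 : ℤ) * ((t⁻¹ * x ^ (2 : ℤ) * t) * t) *
      (x ^ (3 : ℤ)) ^ (18 : ℤ) *
      ((t⁻¹ * x ^ (2 : ℤ) * t) * t)⁻¹ * (x ^ (3 : ℤ)) ^ (6 : ℤ) *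
      ((t⁻¹ * x ^ (2 : ℤ) * t) * t) * (x ^ (3 : ℤ)) ^ (-2 : ℤ) = 1 := by
  have hb := rel_to_conj x t 18 2 2 h
  have h54 := conj_cube x (t⁻¹ * x ^ (2 : ℤ) * t) hb
  have h1 := lemB1 x t h
  set T := (t⁻¹ * x ^ (2 : ℤ) * t) * t with hTdef
  calc T⁻¹ * (x ^ (3 : ℤ)) ^ (-6 : ℤ) * T * (x ^ (3 : ℤ)) ^ (18 : ℤ) *
      T⁻¹ * (x ^ (3 : ℤ)) ^ (6 : ℤ) * T * (x ^ (3 : ℤ)) ^ (-2 : ℤ)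
      = (T⁻¹ * x ^ (18 : ℤ) * T)⁻¹ * x ^ (54 : ℤ) * (T⁻¹ * x ^ (18 : ℤ) * T) *
          x ^ (-6 : ℤ) := by group
    _ = (t⁻¹ * x ^ (2 : ℤ) * t)⁻¹ * x ^ (54 : ℤ) * (t⁻¹ * x ^ (2 : ℤ) * t) * x ^ (-6 : ℤ) := by
        rw [h1]
    _ = ((t⁻¹ * x ^ (2 : ℤ) * t)⁻¹ * x ^ (54 : ℤ) * (t⁻¹ * x ^ (2 : ℤ) * t)) * x ^ (-6 : ℤ) := by
        group
    _ = x ^ (6 : ℤ) * x ^ (-6 : ℤ) := by rw [h54]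
    _ = 1 := by group

end Stmt13Aux

open Stmt13Aux in
theorem stmt_13 :
    (∃ φ : GG 18 2 2 →* GG 18 2 6, Function.Surjective φ) ∧
    (∃ ψ : GG 18 2 6 →* GG 18 2 2, Function.Surjective ψ) := by
  constructor
  · -- φ : a ↦ a³, t ↦ t
    set x : GG 18 2 6 := PresentedGroup.of true with hx
    set τ : GG 18 2 6 := PresentedGroup.of false with hτ
    have hrel : τ⁻¹ * x ^ (-6 : ℤ) * τ * x ^ (18 : ℤ) * τ⁻¹ * x ^ (6 : ℤ) * τ *
        x ^ (-2 : ℤ) = 1 := by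
      have := rel_eq_one 18 2 6
      rwa [mk_Grel] at this
    have hf : ∀ r ∈ ({Grel 18 2 2} : Set (FreeGroup Bool)),
        FreeGroup.lift (fun b => cond b (x ^ (3 : ℤ)) τ) r = 1 := by
      intro r hr
      rw [Set.mem_singleton_iff] at hr
      subst hr
      rw [lift_Grel]
      exact lemA x τ hrel
    refine ⟨PresentedGroup.toGroup hf, ?_⟩
    set φ := PresentedGroup.toGroup hf with hφ
    have h3 : x ^ (3 : ℤ) ∈ φ.range := ⟨PresentedGroup.of true, PresentedGroup.toGroup.of hf⟩
    have ht : τ ∈ φ.range := ⟨PresentedGroup.of false, PresentedGroup.toGroup.of hf⟩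
    have h6 : x ^ (6 : ℤ) ∈ φ.range := by
      have e : x ^ (6 : ℤ) = x ^ (3 : ℤ) * x ^ (3 : ℤ) := by group
      rw [e]; exact mul_mem h3 h3
    have h18 : x ^ (18 : ℤ) ∈ φ.range := by
      have e : x ^ (18 : ℤ) = x ^ (6 : ℤ) * x ^ (6 : ℤ) * x ^ (6 : ℤ) := by group
      rw [e]; exact mul_mem (mul_mem h6 h6) h6
    have hb : τ⁻¹ * x ^ (6 : ℤ) * τ ∈ φ.range := mul_mem (mul_mem (inv_mem ht) h6) ht
    have h2 : x ^ (2 : ℤ) ∈ φ.range := by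
      rw [← rel_to_conj x τ 18 2 6 hrel]
      exact mul_mem (mul_mem (inv_mem hb) h18) hb
    have h1 : x ∈ φ.range := by
      have e : x = x ^ (3 : ℤ) * (x ^ (2 : ℤ))⁻¹ := by group
      rw [e]; exact mul_mem h3 (inv_mem h2)
    intro y
    have : y ∈ φ.range := by
      refine PresentedGroup.generated_by _ φ.range (fun j => ?_) y
      cases j
      · exact ht
      · exact h1
    exact this
  · -- ψ : a ↦ a³, t ↦ (t⁻¹a²t)·t
    set x : GG 18 2 2 := PresentedGroup.of true with hx
    set τ : GG 18 2 2 := PresentedGroup.of false with hτ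
    have hrel : τ⁻¹ * x ^ (-2 : ℤ) * τ * x ^ (18 : ℤ) * τ⁻¹ * x ^ (2 : ℤ) * τ *
        x ^ (-2 : ℤ) = 1 := by
      have := rel_eq_one 18 2 2
      rwa [mk_Grel] at this
    have hf : ∀ r ∈ ({Grel 18 2 6} : Set (FreeGroup Bool)),
        FreeGroup.lift (fun b => cond b (x ^ (3 : ℤ)) ((τ⁻¹ * x ^ (2 : ℤ) * τ) * τ)) r = 1 := by
      intro r hr
      rw [Set.mem_singleton_iff] at hr
      subst hr
      rw [lift_Grel]
      exact lemB x τ hrel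
    refine ⟨PresentedGroup.toGroup hf, ?_⟩
    set ψ := PresentedGroup.toGroup hf with hψ
    have h3 : x ^ (3 : ℤ) ∈ ψ.range := ⟨PresentedGroup.of true, PresentedGroup.toGroup.of hf⟩
    have hT : (τ⁻¹ * x ^ (2 : ℤ) * τ) * τ ∈ ψ.range :=
      ⟨PresentedGroup.of false, PresentedGroup.toGroup.of hf⟩
    have h6 : x ^ (6 : ℤ) ∈ ψ.range := by
      have e : x ^ (6 : ℤ) = x ^ (3 : ℤ) * x ^ (3 : ℤ) := by group
      rw [e]; exact mul_mem h3 h3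
    have h18 : x ^ (18 : ℤ) ∈ ψ.range := by
      have e : x ^ (18 : ℤ) = x ^ (6 : ℤ) * x ^ (6 : ℤ) * x ^ (6 : ℤ) := by group
      rw [e]; exact mul_mem (mul_mem h6 h6) h6
    have hb : τ⁻¹ * x ^ (2 : ℤ) * τ ∈ ψ.range := by
      rw [← lemB1 x τ hrel]
      exact mul_mem (mul_mem (inv_mem hT) h18) hT
    have ht : τ ∈ ψ.range := by
      have e : τ = (τ⁻¹ * x ^ (2 : ℤ) * τ)⁻¹ * ((τ⁻¹ * x ^ (2 : ℤ) * τ) * τ) := by group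
      rw [e]; exact mul_mem (inv_mem hb) hT
    have h2 : x ^ (2 : ℤ) ∈ ψ.range := by
      rw [← rel_to_conj x τ 18 2 2 hrel]
      exact mul_mem (mul_mem (inv_mem hb) h18) hb
    have h1 : x ∈ ψ.range := by
      have e : x = x ^ (3 : ℤ) * (x ^ (2 : ℤ))⁻¹ := by group
      rw [e]; exact mul_mem h3 (inv_mem h2)
    intro y
    have : y ∈ ψ.range := by
      refine PresentedGroup.generated_by _ ψ.range (fun j => ?_) y
      cases j
      · exact ht
      · exact h1
    exact this
end
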